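/- arXiv:1308.4893 — 2 statements merged into one kernel-verified Lean document; each statement's English description precedes it below -/
import Mathlib

section
/- Let G = (V,E) be a (possibly infinite) loopless graph and K : V × V → ℝ a symmetric function such that: (a) K(x,y) ≤ 0 whenever x ≠ y are nonadjacent; (b) for every finite subset S ⊆ V the matrix (K(x,y) − 1)_{x,y∈S} is positive semidefinite; (c) K(x,x) ≤ B for all x ∈ V. Then every finite independent set I of G satisfies |I| ≤ B. -/
open Finset

lemma sum_sum_le_sum_diag {ι M : Type*} [AddCommMonoid M] [PartialOrder M]
    [IsOrderedAddMonoid M] (s : Finset ι) (f : ι → ι → M)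
    (hf : ∀ x ∈ s, ∀ y ∈ s, x ≠ y → f x y ≤ 0) :
    ∑ x ∈ s, ∑ y ∈ s, f x y ≤ ∑ x ∈ s, f x x := by
  classical
  refine sum_le_sum fun x hx => ?_
  rw [← add_sum_erase s _ hx]
  exact add_le_of_nonpos_right <| sum_nonpos fun y hy =>
    hf x hx y (mem_of_mem_erase hy) (ne_of_mem_erase hy).symm

lemma card_sq_le_sum_sum {V : Type*} (K : V → V → ℝ) (S : Finset V)
    (hpsd : ∀ c : V → ℝ, 0 ≤ ∑ x ∈ S, ∑ y ∈ S, c x * c y * (K x y - 1)) :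
    (#S : ℝ) ^ 2 ≤ ∑ x ∈ S, ∑ y ∈ S, K x y := by
  have h := hpsd fun _ => 1
  simp only [one_mul, sum_sub_distrib, sum_const, nsmul_eq_mul, mul_one] at h
  linarith

theorem stmt2_general {V : Type*} [Nonempty V] (G : SimpleGraph V) (K : V → V → ℝ) (B : ℝ)
    (hnonadj : ∀ x y, x ≠ y → ¬G.Adj x y → K x y ≤ 0)
    (hpsd : ∀ (S : Finset V) (c : V → ℝ),
      0 ≤ ∑ x ∈ S, ∑ y ∈ S, c x * c y * (K x y - 1))
    (hdiag : ∀ x, K x x ≤ B)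
    (I : Finset V) (hI : ∀ x ∈ I, ∀ y ∈ I, x ≠ y → ¬G.Adj x y) :
    (I.card : ℝ) ≤ B := by
  obtain ⟨v⟩ := ‹Nonempty V›
  have hB : 0 ≤ B := by
    have hv : 1 ≤ K v v := by simpa using card_sq_le_sum_sum K {v} (hpsd {v})
    linarith [hdiag v]
  have hsq : (#I : ℝ) ^ 2 ≤ #I * B := calc
    (#I : ℝ) ^ 2 ≤ ∑ x ∈ I, ∑ y ∈ I, K x y := card_sq_le_sum_sum K I (hpsd I)
    _ ≤ ∑ x ∈ I, K x x := sum_sum_le_sum_diag I K fun x hx y hy hxy =>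
      hnonadj x y hxy (hI x hx y hy hxy)
    _ ≤ ∑ _x ∈ I, B := sum_le_sum fun x _ => hdiag x
    _ = #I * B := by rw [sum_const, nsmul_eq_mul]
  nlinarith

/-- Generalized theta-prime bound (Theorem on kernels bounding the independence
number): if `K` is symmetric, nonpositive on distinct nonadjacent pairs, `K - J`
is positive semidefinite on every finite subset, and `K(x,x) ≤ B`, then every
finite independent set has at most `B` elements. -/
theorem stmt2 {V : Type*} [Nonempty V] (G : SimpleGraph V) (K : V → V → ℝ) (B : ℝ)
    (hsymm : ∀ x y, K x y = K y x)
    (hnonadj : ∀ x y, x ≠ y → ¬G.Adj x y → K x y ≤ 0)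
    (hpsd : ∀ (S : Finset V) (c : V → ℝ),
      0 ≤ ∑ x ∈ S, ∑ y ∈ S, c x * c y * (K x y - 1))
    (hdiag : ∀ x, K x x ≤ B)
    (I : Finset V) (hI : ∀ x ∈ I, ∀ y ∈ I, x ≠ y → ¬G.Adj x y) :
    (I.card : ℝ) ≤ B :=
  stmt2_general G K B hnonadj hpsd hdiag I hI
end

section
/- The angle between two adjacent faces of a regular tetrahedron equals arccos(1/3), and arccos(1/3) < 2π/5; consequently five regular tetrahedra sharing a common edge cannot tile the full angle around that edge. -/
open Real EuclideanGeometry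

/-!
By Apollonius, the medians from the two free vertices to the midpoint `m` of the common edge
have length `(√3/2) d`, while the free vertices are at distance `d`; the law of cosines at `m`
then gives `cos θ = 1/3`. Since `cos (2π/5) = (√5 - 1)/4 < 1/3` and `arccos` is decreasing,
`θ < 2π/5`.
-/

section Tetrahedron

variable {V P : Type*} [NormedAddCommGroup V] [InnerProductSpace ℝ V] [MetricSpace P]
  [NormedAddTorsor V P]

theorem dist_midpoint_sq_of_equilateral {a b c : P} {d : ℝ} (hab : dist a b = d)
    (hca : dist c a = d) (hcb : dist c b = d) :
    dist c (midpoint ℝ a b) ^ 2 = 3 / 4 * d ^ 2 := by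
  have := dist_sq_add_dist_sq_eq_two_mul_dist_midpoint_sq_add_half_dist_sq c a b
  rw [hab, hca, hcb] at this
  linarith

theorem angle_midpoint_eq_arccos_one_third_of_regular {a b c e : P} {d : ℝ} (hd : d ≠ 0)
    (hab : dist a b = d) (hca : dist c a = d) (hcb : dist c b = d) (hea : dist e a = d)
    (heb : dist e b = d) (hce : dist c e = d) :
    ∠ c (midpoint ℝ a b) e = arccos (1 / 3) := by
  have hc := dist_midpoint_sq_of_equilateral hab hca hcb
  have he := dist_midpoint_sq_of_equilateral hab hea heb
  have hce_m : dist c (midpoint ℝ a b) = dist e (midpoint ℝ a b) :=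
    (pow_left_inj₀ dist_nonneg dist_nonneg two_ne_zero).1 (hc.trans he.symm)
  have law := dist_sq_eq_dist_sq_add_dist_sq_sub_two_mul_dist_mul_dist_mul_cos_angle c
    (midpoint ℝ a b) e
  rw [← hce_m, hce] at law
  have hcos : cos (∠ c (midpoint ℝ a b) e) = 1 / 3 := by
    have h : d ^ 2 * (cos (∠ c (midpoint ℝ a b) e) - 1 / 3) = 0 := by
      linear_combination (2 / 3) * law + (4 / 3 - 4 / 3 * cos (∠ c (midpoint ℝ a b) e)) * hc
    linarith [(mul_eq_zero.1 h).resolve_left (pow_ne_zero 2 hd)]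
  rw [← hcos, arccos_cos (angle_nonneg _ _ _) (angle_le_pi _ _ _)]

end Tetrahedron

theorem cos_two_pi_div_five : cos (2 * π / 5) = (√5 - 1) / 4 := by
  have hsq5 : √5 ^ 2 = 5 := sq_sqrt (by norm_num)
  rw [show 2 * π / 5 = 2 * (π / 5) by ring, cos_two_mul, cos_pi_div_five]
  linear_combination (1 / 8) * hsq5

theorem arccos_one_third_lt_two_pi_div_five : arccos (1 / 3) < 2 * π / 5 := by
  have hsqrt5 : √5 < 7 / 3 := (sqrt_lt' (by norm_num)).2 (by norm_num)
  have hlt : cos (2 * π / 5) < 1 / 3 := by rw [cos_two_pi_div_five]; linarith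
  have := strictAntiOn_arccos ⟨neg_one_le_cos _, cos_le_one _⟩ ⟨by norm_num, by norm_num⟩ hlt
  rwa [arccos_cos (by positivity) (by linarith [pi_pos])] at this

/-- The dihedral angle of a regular tetrahedron (the angle between two adjacent
faces, measured at the midpoint `m` of the common edge as the angle between the
vectors from `m` to the two opposite vertices) equals `arccos(1/3)`, and
`arccos(1/3) < 2π/5`; consequently `5 · arccos(1/3) < 2π`, so five regular
tetrahedra sharing a common edge cannot tile the full angle around that edge. -/
theorem stmt8 (v : Fin 4 → EuclideanSpace ℝ (Fin 3)) (d : ℝ) (hd : 0 < d)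
    (hreg : ∀ i j, i ≠ j → dist (v i) (v j) = d) :
    InnerProductGeometry.angle (v 2 - midpoint ℝ (v 0) (v 1))
        (v 3 - midpoint ℝ (v 0) (v 1)) = arccos (1 / 3) ∧
    arccos (1 / 3) < 2 * π / 5 ∧
    5 * arccos (1 / 3) < 2 * π := by
  have hdihedral : ∠ (v 2) (midpoint ℝ (v 0) (v 1)) (v 3) = arccos (1 / 3) :=
    angle_midpoint_eq_arccos_one_third_of_regular hd.ne' (hreg 0 1 (by decide))
      (hreg 2 0 (by decide)) (hreg 2 1 (by decide)) (hreg 3 0 (by decide))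
      (hreg 3 1 (by decide)) (hreg 2 3 (by decide))
  have hlt := arccos_one_third_lt_two_pi_div_five
  exact ⟨hdihedral, hlt, by linarith⟩
end
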